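/- Testing-an-innovation setup; assume (α ∈ (0,1) and r ∈ [0,1]) or (α = 0 and r = 1), and assume q0 < 1/2. Then the constant rule δ¹ ≡ 1 satisfies sup over states of R(δ¹,·) = q0 and this supremum is attained; and every treatment rule δ satisfies sup over states of R(δ,·) ≥ q0. Hence δ¹ is a minimax regret rule and the minimax regret value equals q0. -/

import Mathlib

open MeasureTheory Set
open scoped Classical

noncomputable section

/-- The set of `α`-quantiles of a Borel probability measure on `[0,1]`
(represented as a measure on `ℝ` giving mass 1 to `[0,1]`). -/
def quantSet (α : ℝ) (μ : Measure ℝ) : Set ℝ :=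
  {q | q ∈ Icc (0 : ℝ) 1 ∧ α ≤ (μ (Icc 0 q)).toReal ∧ 1 - α ≤ (μ (Icc q 1)).toReal}

/-- The `(α, r)`-quantile of `μ`: `r · sup Q(α,μ) + (1 - r) · inf Q(α,μ)`. -/
def quant (α r : ℝ) (μ : Measure ℝ) : ℝ :=
  r * sSup (quantSet α μ) + (1 - r) * sInf (quantSet α μ)

/-- `μ` is a Borel probability measure concentrated on `[0,1]`. -/
def IsProb01 (μ : Measure ℝ) : Prop :=
  IsProbabilityMeasure μ ∧ μ (Icc (0 : ℝ) 1) = 1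

/-- The mixture `p · μ1 + (1 - p) · μ0`. -/
def mix (p : ℝ) (μ0 μ1 : Measure ℝ) : Measure ℝ :=
  ENNReal.ofReal p • μ1 + ENNReal.ofReal (1 - p) • μ0

/-- The "Bernoulli" measure on `[0,1]`: mass `a` at `0` and mass `1 - a` at `1`. -/
def Ber (a : ℝ) : Measure ℝ :=
  ENNReal.ofReal a • Measure.dirac (0 : ℝ) + ENNReal.ofReal (1 - a) • Measure.dirac (1 : ℝ)

/-- Law of the sample in the testing-an-innovation design: `N` i.i.d. draws from `μ1`. -/
def sampleLawTI (N : ℕ) (μ1 : Measure ℝ) : Measure (Fin N → ℝ) :=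
  Measure.pi fun _ => μ1

/-- Regret of a treatment rule in the testing-an-innovation design, with known
`α`-quantile `q0` of the control distribution `μ0`. -/
def regretTI (α r : ℝ) (N : ℕ) (q0 : ℝ) (δ : (Fin N → ℝ) → ℝ)
    (μ0 μ1 : Measure ℝ) : ℝ :=
  max q0 (quant α r μ1) -
    quant α r (mix (∫ w, δ w ∂(sampleLawTI N μ1)) μ0 μ1)

/-- The set of regret values of the rule `δ` over all states with `q_{α,r}(μ0) = q0`. -/
def regretSetTI (α r : ℝ) (N : ℕ) (q0 : ℝ) (δ : (Fin N → ℝ) → ℝ) : Set ℝ :=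
  {v | ∃ μ0 μ1 : Measure ℝ, IsProb01 μ0 ∧ IsProb01 μ1 ∧ quant α r μ0 = q0 ∧
      v = regretTI α r N q0 δ μ0 μ1}

-- helpers
lemma dirac_toReal (c : ℝ) (S : Set ℝ) (hS : MeasurableSet S) :
    ((Measure.dirac c) S).toReal = if c ∈ S then 1 else 0 := by
  rw [Measure.dirac_apply' c hS]
  by_cases h : c ∈ S <;> simp [h]

lemma Ber_apply (a : ℝ) (S : Set ℝ) :
    Ber a S = ENNReal.ofReal a * Measure.dirac (0:ℝ) S
      + ENNReal.ofReal (1 - a) * Measure.dirac (1:ℝ) S := by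
  simp [Ber]

lemma Ber_toReal (a : ℝ) (ha : 0 ≤ a) (ha1 : a ≤ 1) (S : Set ℝ) (hS : MeasurableSet S) :
    (Ber a S).toReal = (if (0:ℝ) ∈ S then a else 0) + (if (1:ℝ) ∈ S then 1 - a else 0) := by
  rw [Ber_apply, Measure.dirac_apply' _ hS, Measure.dirac_apply' _ hS]
  by_cases h0 : (0:ℝ) ∈ S <;> by_cases h1 : (1:ℝ) ∈ S <;>
    simp [h0, h1, ← ENNReal.ofReal_add ha (by linarith : (0:ℝ) ≤ 1 - a),
      ENNReal.toReal_ofReal, ha, (by linarith : (0:ℝ) ≤ 1 - a), (by linarith : 0 ≤ a + (1-a))]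

lemma Ber_isProb (a : ℝ) (ha : 0 ≤ a) (ha1 : a ≤ 1) : IsProbabilityMeasure (Ber a) := by
  constructor
  rw [Ber_apply]
  simp [← ENNReal.ofReal_add ha (by linarith : (0:ℝ) ≤ 1 - a)]

lemma isProb01_Ber (a : ℝ) (ha : 0 ≤ a) (ha1 : a ≤ 1) : IsProb01 (Ber a) := by
  refine ⟨Ber_isProb a ha ha1, ?_⟩
  rw [Ber_apply]
  rw [Measure.dirac_apply_of_mem (by norm_num : (0:ℝ) ∈ Icc (0:ℝ) 1),
    Measure.dirac_apply_of_mem (by norm_num : (1:ℝ) ∈ Icc (0:ℝ) 1)]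
  simp [← ENNReal.ofReal_add ha (by linarith : (0:ℝ) ≤ 1 - a)]

lemma isProb01_dirac (c : ℝ) (hc : c ∈ Icc (0:ℝ) 1) : IsProb01 (Measure.dirac c) :=
  ⟨inferInstance, Measure.dirac_apply_of_mem hc⟩

lemma mix_one (μ0 μ1 : Measure ℝ) : mix 1 μ0 μ1 = μ1 := by
  simp [mix]

lemma nu_toReal (p a c : ℝ) (hp : 0 ≤ p) (hp1 : p ≤ 1) (ha : 0 ≤ a) (ha1 : a ≤ 1)
    (S : Set ℝ) (hS : MeasurableSet S) :
    ((mix p (Measure.dirac c) (Ber a)) S).toReal =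
      p * ((if (0:ℝ) ∈ S then a else 0) + (if (1:ℝ) ∈ S then 1 - a else 0))
        + (1 - p) * (if c ∈ S then 1 else 0) := by
  have hB : IsProbabilityMeasure (Ber a) := Ber_isProb a ha ha1
  have h1 : (mix p (Measure.dirac c) (Ber a)) S
      = ENNReal.ofReal p * Ber a S + ENNReal.ofReal (1 - p) * Measure.dirac c S := by
    simp [mix]
  rw [h1, ENNReal.toReal_add, ENNReal.toReal_mul, ENNReal.toReal_mul,
    ENNReal.toReal_ofReal hp, ENNReal.toReal_ofReal (by linarith : (0:ℝ) ≤ 1 - p),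
    Ber_toReal a ha ha1 S hS, dirac_toReal c S hS]
  · exact ENNReal.mul_ne_top ENNReal.ofReal_ne_top (measure_ne_top _ _)
  · exact ENNReal.mul_ne_top ENNReal.ofReal_ne_top (measure_ne_top _ _)

section
variable (α r : ℝ) (μ : Measure ℝ)
lemma quantSet_subset : quantSet α μ ⊆ Icc 0 1 := fun _ hq => hq.1

lemma quant_mem_Icc (hr : r ∈ Icc (0:ℝ) 1) : quant α r μ ∈ Icc (0:ℝ) 1 := by
  rcases eq_empty_or_nonempty (quantSet α μ) with hemp | hne
  · simp [quant, hemp, Real.sSup_empty, Real.sInf_empty]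
  · have hsub := quantSet_subset α μ
    have hbddA : BddAbove (quantSet α μ) := (bddAbove_Icc (a := (0:ℝ)) (b := 1)).mono hsub
    have hbddB : BddBelow (quantSet α μ) := (bddBelow_Icc : BddBelow (Icc (0:ℝ) 1)).mono hsub
    obtain ⟨x, hx⟩ := hne
    have h1 : sInf (quantSet α μ) ≤ sSup (quantSet α μ) := csInf_le_csSup ⟨x, hx⟩ hbddB hbddA
    have h2 : 0 ≤ sInf (quantSet α μ) := le_csInf ⟨x, hx⟩ (fun y hy => (hsub hy).1)
    have h3 : sSup (quantSet α μ) ≤ 1 := csSup_le ⟨x, hx⟩ (fun y hy => (hsub hy).2)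
    constructor
    · have := mul_nonneg hr.1 (le_trans h2 h1)
      have := mul_nonneg (by linarith [hr.2] : 0 ≤ 1 - r) h2
      simp only [quant]; linarith
    · have := mul_le_mul_of_nonneg_left h3 hr.1
      have h4 : sInf (quantSet α μ) ≤ 1 := le_trans h1 h3
      have := mul_le_mul_of_nonneg_left h4 (by linarith [hr.2] : 0 ≤ 1 - r)
      simp only [quant]; linarith

lemma quant_of_singleton {c : ℝ} (hset : quantSet α μ = {c}) : quant α r μ = c := by
  simp [quant, hset, csSup_singleton, csInf_singleton]; ring

lemma quant_of_Icc {c : ℝ} (hc : 0 ≤ c) (hset : quantSet α μ = Icc 0 c) :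
    quant α 1 μ = c := by
  simp [quant, hset, csSup_Icc hc, csInf_Icc hc]
end

lemma Ber_zero : Ber 0 = Measure.dirac 1 := by simp [Ber]

lemma quantSet_dirac_pos {α c : ℝ} (hα : 0 < α) (hα1 : α < 1) (hc : c ∈ Icc (0:ℝ) 1) :
    quantSet α (Measure.dirac c) = {c} := by
  ext q
  simp only [quantSet, mem_setOf_eq, mem_singleton_iff,
    dirac_toReal c _ measurableSet_Icc]
  constructor
  · rintro ⟨hq, hF, hG⟩
    by_cases h1 : c ∈ Icc (0:ℝ) q
    · by_cases h2 : c ∈ Icc q 1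
      · have a1 := (mem_Icc.1 h1).2
        have a2 := (mem_Icc.1 h2).1
        linarith
      · rw [if_neg h2] at hG; linarith
    · rw [if_neg h1] at hF; linarith
  · rintro rfl
    rw [if_pos (mem_Icc.2 ⟨hc.1, le_refl _⟩), if_pos (mem_Icc.2 ⟨le_refl _, hc.2⟩)]
    exact ⟨hc, by linarith, by linarith⟩

lemma quantSet_dirac_zero {c : ℝ} (hc : c ∈ Icc (0:ℝ) 1) :
    quantSet 0 (Measure.dirac c) = Icc 0 c := by
  ext q
  simp only [quantSet, mem_setOf_eq, dirac_toReal c _ measurableSet_Icc,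
    ENNReal.toReal_nonneg, sub_zero, true_and]
  constructor
  · rintro ⟨hq, hG⟩
    refine mem_Icc.2 ⟨(mem_Icc.1 hq).1, ?_⟩
    by_cases h2 : c ∈ Icc q 1
    · exact (mem_Icc.1 h2).1
    · rw [if_neg h2] at hG; linarith
  · intro hqc
    have hq0 := (mem_Icc.1 hqc).1
    have hqc2 := (mem_Icc.1 hqc).2
    rw [if_pos (mem_Icc.2 ⟨hqc2, hc.2⟩)]
    exact ⟨mem_Icc.2 ⟨hq0, le_trans hqc2 hc.2⟩, by split_ifs <;> norm_num, le_refl 1⟩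

lemma quantSet_Ber_gt {α a : ℝ} (hα : 0 ≤ α) (haα : α < a) (ha1 : a ≤ 1) :
    quantSet α (Ber a) = {0} := by
  have ha0 : 0 ≤ a := le_trans hα haα.le
  ext q
  simp only [quantSet, mem_setOf_eq, mem_singleton_iff,
    Ber_toReal a ha0 ha1 _ measurableSet_Icc]
  constructor
  · rintro ⟨hq, hF, hG⟩
    obtain ⟨hq0, hq1⟩ := mem_Icc.1 hq
    by_contra hne
    have hqpos : 0 < q := lt_of_le_of_ne hq0 (Ne.symm hne)
    rw [if_neg (by rw [mem_Icc]; intro hh; linarith [hh.1] : (0:ℝ) ∉ Icc q 1),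
      if_pos (mem_Icc.2 ⟨hq1, le_refl 1⟩)] at hG
    linarith
  · rintro rfl
    rw [if_pos (by rw [mem_Icc]; norm_num : (0:ℝ) ∈ Icc (0:ℝ) 0),
      if_neg (by rw [mem_Icc]; norm_num : (1:ℝ) ∉ Icc (0:ℝ) 0),
      if_pos (by rw [mem_Icc]; norm_num : (0:ℝ) ∈ Icc (0:ℝ) 1),
      if_pos (by rw [mem_Icc]; norm_num : (1:ℝ) ∈ Icc (0:ℝ) 1)]
    exact ⟨mem_Icc.2 ⟨le_refl 0, by norm_num⟩, by linarith, by linarith⟩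

lemma quantSet_Ber_lt {α a : ℝ} (ha0 : 0 ≤ a) (haα : a < α) (hα1 : α ≤ 1) :
    quantSet α (Ber a) = {1} := by
  ext q
  simp only [quantSet, mem_setOf_eq, mem_singleton_iff,
    Ber_toReal a ha0 (by linarith : a ≤ 1) _ measurableSet_Icc]
  constructor
  · rintro ⟨hq, hF, hG⟩
    obtain ⟨hq0, hq1⟩ := mem_Icc.1 hq
    by_contra hne
    have hqlt : q < 1 := lt_of_le_of_ne hq1 hne
    rw [if_pos (mem_Icc.2 ⟨le_refl (0:ℝ), hq0⟩),
      if_neg (by rw [mem_Icc]; intro hh; linarith [hh.2] : (1:ℝ) ∉ Icc (0:ℝ) q)] at hF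
    linarith
  · rintro rfl
    rw [if_pos (by rw [mem_Icc]; norm_num : (0:ℝ) ∈ Icc (0:ℝ) 1),
      if_pos (by rw [mem_Icc]; norm_num : (1:ℝ) ∈ Icc (0:ℝ) 1),
      if_neg (by rw [mem_Icc]; norm_num : (0:ℝ) ∉ Icc (1:ℝ) 1),
      if_pos (by rw [mem_Icc]; norm_num : (1:ℝ) ∈ Icc (1:ℝ) 1)]
    exact ⟨mem_Icc.2 ⟨by norm_num, le_refl 1⟩, by linarith, by linarith⟩

lemma quantSet_nu_good {α p a c : ℝ} (hp : 0 ≤ p) (hp1 : p ≤ 1) (ha : 0 ≤ a) (ha1 : a ≤ 1)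
    (hs : p * a < α) (ht : p * (1 - a) < 1 - α) (hc0 : 0 ≤ c) (hc1 : c < 1) :
    quantSet α (mix p (Measure.dirac c) (Ber a)) = {c} := by
  have hα0 : 0 < α := lt_of_le_of_lt (mul_nonneg hp ha) hs
  ext q
  simp only [quantSet, mem_setOf_eq, mem_singleton_iff,
    nu_toReal p a c hp hp1 ha ha1 _ measurableSet_Icc]
  constructor
  · rintro ⟨hq, hF, hG⟩
    obtain ⟨hq0, hq1⟩ := mem_Icc.1 hq
    rcases lt_trichotomy q c with hlt | heq | hgt
    · exfalso
      rw [if_pos (mem_Icc.2 ⟨le_refl (0:ℝ), hq0⟩),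
        if_neg (by rw [mem_Icc]; intro hh; linarith [hh.2] : (1:ℝ) ∉ Icc (0:ℝ) q),
        if_neg (by rw [mem_Icc]; intro hh; linarith [hh.2] : c ∉ Icc (0:ℝ) q)] at hF
      simp at hF; linarith
    · exact heq
    · exfalso
      rw [if_neg (by rw [mem_Icc]; intro hh; linarith [hh.1] : (0:ℝ) ∉ Icc q 1),
        if_pos (mem_Icc.2 ⟨hq1, le_refl (1:ℝ)⟩),
        if_neg (by rw [mem_Icc]; intro hh; linarith [hh.1] : c ∉ Icc q 1)] at hG
      simp at hG; linarith
  · rintro rfl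
    rw [if_pos (mem_Icc.2 ⟨le_refl (0:ℝ), hc0⟩),
      if_neg (by rw [mem_Icc]; intro hh; linarith [hh.2] : (1:ℝ) ∉ Icc (0:ℝ) q),
      if_pos (mem_Icc.2 ⟨hc0, le_refl _⟩),
      if_pos (mem_Icc.2 ⟨le_refl _, hc1.le⟩),
      if_pos (mem_Icc.2 ⟨hc1.le, le_refl (1:ℝ)⟩)]
    refine ⟨mem_Icc.2 ⟨hc0, hc1.le⟩, by linarith, ?_⟩
    by_cases h0 : (0:ℝ) ∈ Icc q 1
    · rw [if_pos h0]
      have := mul_nonneg hp ha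
      linarith
    · rw [if_neg h0]
      linarith

lemma quantSet_nu_zero_u {u c : ℝ} (hu0 : 0 ≤ u) (hu1 : u < 1) (hc : c ∈ Icc (0:ℝ) 1) :
    quantSet 0 (mix u (Measure.dirac c) (Ber 0)) = Icc 0 c := by
  ext q
  simp only [quantSet, mem_setOf_eq, sub_zero,
    nu_toReal u 0 c hu0 hu1.le (le_refl 0) (by norm_num) _ measurableSet_Icc]
  constructor
  · rintro ⟨hq, _, hG⟩
    obtain ⟨hq0, hq1⟩ := mem_Icc.1 hq
    refine mem_Icc.2 ⟨hq0, ?_⟩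
    by_contra hgt
    push_neg at hgt
    rw [if_pos (mem_Icc.2 ⟨hq1, le_refl (1:ℝ)⟩),
      if_neg (by rw [mem_Icc]; intro hh; linarith [hh.1] : c ∉ Icc q 1)] at hG
    by_cases h0 : (0:ℝ) ∈ Icc q 1
    · rw [if_pos h0] at hG; simp at hG; linarith
    · rw [if_neg h0] at hG; simp at hG; linarith
  · intro hqc
    obtain ⟨hq0, hqc2⟩ := mem_Icc.1 hqc
    have hq1 : q ≤ 1 := le_trans hqc2 hc.2
    rw [if_pos (mem_Icc.2 ⟨hq1, le_refl (1:ℝ)⟩), if_pos (mem_Icc.2 ⟨hqc2, hc.2⟩)]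
    refine ⟨mem_Icc.2 ⟨hq0, hq1⟩, ?_, ?_⟩
    · split_ifs <;> nlinarith
    · split_ifs <;> nlinarith

lemma quantSet_nu_zero_pos {p b c : ℝ} (hp1 : p ≤ 1) (hb1 : b ≤ 1) (hpb : 0 < p * b)
    (hp : 0 ≤ p) (hb : 0 ≤ b) (hc : c ∈ Icc (0:ℝ) 1) :
    quantSet 0 (mix p (Measure.dirac c) (Ber b)) = {0} := by
  ext q
  simp only [quantSet, mem_setOf_eq, mem_singleton_iff, sub_zero,
    nu_toReal p b c hp hp1 hb hb1 _ measurableSet_Icc]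
  constructor
  · rintro ⟨hq, _, hG⟩
    obtain ⟨hq0, hq1⟩ := mem_Icc.1 hq
    by_contra hne
    have hqpos : 0 < q := lt_of_le_of_ne hq0 (Ne.symm hne)
    rw [if_neg (by rw [mem_Icc]; intro hh; linarith [hh.1] : (0:ℝ) ∉ Icc q 1),
      if_pos (mem_Icc.2 ⟨hq1, le_refl (1:ℝ)⟩)] at hG
    by_cases hcq : c ∈ Icc q 1
    · rw [if_pos hcq] at hG; nlinarith
    · rw [if_neg hcq] at hG; nlinarith
  · rintro rfl
    rw [if_pos (by rw [mem_Icc]; norm_num : (0:ℝ) ∈ Icc (0:ℝ) 0),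
      if_neg (by rw [mem_Icc]; push_neg; intro; norm_num : (1:ℝ) ∉ Icc (0:ℝ) 0),
      if_pos (by rw [mem_Icc]; norm_num : (0:ℝ) ∈ Icc (0:ℝ) 1),
      if_pos (by rw [mem_Icc]; norm_num : (1:ℝ) ∈ Icc (0:ℝ) 1),
      if_pos hc]
    by_cases hcq : c ∈ Icc (0:ℝ) 0
    · rw [if_pos hcq]
      refine ⟨mem_Icc.2 ⟨le_refl 0, by norm_num⟩, by nlinarith, by nlinarith⟩
    · rw [if_neg hcq]
      refine ⟨mem_Icc.2 ⟨le_refl 0, by norm_num⟩, by nlinarith, by nlinarith⟩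

def wvec (N : ℕ) (T : Finset (Fin N)) : Fin N → ℝ := fun i => if i ∈ T then 0 else 1

def coefE (N : ℕ) (a : ℝ) (T : Finset (Fin N)) : ENNReal :=
  ENNReal.ofReal a ^ T.card * ENNReal.ofReal (1 - a) ^ (N - T.card)

lemma pi_Ber_eq (N : ℕ) (a : ℝ) (ha : 0 ≤ a) (ha1 : a ≤ 1) :
    sampleLawTI N (Ber a) =
      ∑ T ∈ (Finset.univ : Finset (Fin N)).powerset,
        coefE N a T • Measure.dirac (wvec N T) := by
  haveI : IsProbabilityMeasure (Ber a) := Ber_isProb a ha ha1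
  unfold sampleLawTI
  apply Measure.pi_eq
  intro s hs
  rw [Measure.finset_sum_apply]
  have key : ∀ T ∈ (Finset.univ : Finset (Fin N)).powerset,
      (coefE N a T • Measure.dirac (wvec N T)) (Set.pi univ s)
      = (∏ i ∈ T, (ENNReal.ofReal a * Measure.dirac (0:ℝ) (s i))) *
        ∏ i ∈ Finset.univ \ T, (ENNReal.ofReal (1-a) * Measure.dirac (1:ℝ) (s i)) := by
    intro T _
    rw [Measure.smul_apply, smul_eq_mul]
    by_cases hw : wvec N T ∈ Set.pi univ s
    · rw [Measure.dirac_apply_of_mem hw, mul_one]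
      have h1 : ∀ i ∈ T, ENNReal.ofReal a * Measure.dirac (0:ℝ) (s i) = ENNReal.ofReal a := by
        intro i hi
        rw [Measure.dirac_apply_of_mem (by simpa [wvec, hi] using hw i (mem_univ i)), mul_one]
      have h2 : ∀ i ∈ Finset.univ \ T,
          ENNReal.ofReal (1-a) * Measure.dirac (1:ℝ) (s i) = ENNReal.ofReal (1-a) := by
        intro i hi
        have hiT : i ∉ T := (Finset.mem_sdiff.1 hi).2
        rw [Measure.dirac_apply_of_mem (by simpa [wvec, hiT] using hw i (mem_univ i)), mul_one]
      rw [Finset.prod_congr rfl h1, Finset.prod_congr rfl h2, Finset.prod_const,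
        Finset.prod_const, Finset.card_sdiff_of_subset (Finset.subset_univ T), Finset.card_univ,
        Fintype.card_fin, coefE]
    · rw [Measure.dirac_apply' _ (MeasurableSet.univ_pi hs), indicator_of_notMem hw,
        mul_zero]
      rw [Set.mem_univ_pi] at hw
      push_neg at hw
      obtain ⟨i, hi⟩ := hw
      by_cases hiT : i ∈ T
      · rw [Finset.prod_eq_zero hiT, zero_mul]
        rw [Measure.dirac_apply' _ (hs i), indicator_of_notMem
          (by simpa [wvec, hiT] using hi), mul_zero]
      · rw [Finset.prod_eq_zero (Finset.mem_sdiff.2 ⟨Finset.mem_univ i, hiT⟩), mul_zero]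
        rw [Measure.dirac_apply' _ (hs i), indicator_of_notMem
          (by simpa [wvec, hiT] using hi), mul_zero]
  rw [Finset.sum_congr rfl key, ← Finset.prod_add]
  exact Finset.prod_congr rfl fun i _ => (Ber_apply a (s i)).symm

lemma coefE_toReal (N : ℕ) (a : ℝ) (T : Finset (Fin N)) (ha : 0 ≤ a) (ha1 : a ≤ 1) :
    (coefE N a T).toReal = a ^ T.card * (1-a) ^ (N - T.card) := by
  simp [coefE, ENNReal.toReal_mul, ENNReal.toReal_pow, ENNReal.toReal_ofReal ha,
    ENNReal.toReal_ofReal (by linarith : (0:ℝ) ≤ 1 - a)]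

lemma integral_sampleLaw_Ber (N : ℕ) (a : ℝ) (ha : 0 ≤ a) (ha1 : a ≤ 1)
    (δ : (Fin N → ℝ) → ℝ) :
    ∫ w, δ w ∂(sampleLawTI N (Ber a)) =
      ∑ T ∈ (Finset.univ : Finset (Fin N)).powerset,
        a ^ T.card * (1 - a) ^ (N - T.card) * δ (wvec N T) := by
  rw [pi_Ber_eq N a ha ha1, integral_finset_sum_measure ?_]
  · refine Finset.sum_congr rfl fun T _ => ?_
    rw [integral_smul_measure, integral_dirac, coefE_toReal N a T ha ha1, smul_eq_mul]
  · intro T _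
    refine Integrable.smul_measure ?_ ?_
    · exact (integrable_const (δ (wvec N T))).congr (ae_eq_dirac δ).symm
    · exact ENNReal.mul_ne_top (ENNReal.pow_ne_top ENNReal.ofReal_ne_top)
        (ENNReal.pow_ne_top ENNReal.ofReal_ne_top)

lemma sum_coef (N : ℕ) (a : ℝ) :
    ∑ T ∈ (Finset.univ : Finset (Fin N)).powerset,
      a ^ T.card * (1 - a) ^ (N - T.card) = 1 := by
  have h := Finset.prod_add (fun _ : Fin N => a) (fun _ : Fin N => 1 - a) Finset.univ
  simp only [Finset.prod_const, Finset.card_sdiff_of_subset (Finset.subset_univ _), Finset.card_univ,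
    Fintype.card_fin] at h
  rw [← h]
  norm_num

lemma integral_sampleLaw_one (N : ℕ) (μ1 : Measure ℝ) (hμ1 : IsProbabilityMeasure μ1) :
    ∫ _w, (1:ℝ) ∂(sampleLawTI N μ1) = 1 := by
  haveI := hμ1
  haveI : IsProbabilityMeasure (sampleLawTI N μ1) := by
    unfold sampleLawTI; infer_instance
  simp

lemma regret_le_one (α r : ℝ) (hr : r ∈ Icc (0:ℝ) 1) (N : ℕ) (q0 : ℝ)
    (hq01 : q0 ∈ Icc (0:ℝ) 1) (δ : (Fin N → ℝ) → ℝ) :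
    ∀ v ∈ regretSetTI α r N q0 δ, v ≤ 1 := by
  rintro v ⟨μ0, μ1, h0, h1, hq0, rfl⟩
  have hA := quant_mem_Icc α r μ1 hr
  have hB := quant_mem_Icc α r (mix (∫ w, δ w ∂(sampleLawTI N μ1)) μ0 μ1) hr
  have hmax : max q0 (quant α r μ1) ≤ 1 := max_le hq01.2 hA.2
  simp only [regretTI]
  linarith [hB.1]


/-- testing an innovation with `q0 < 1/2`: the constant rule `1` has maximal
regret `q0` (attained); every rule has supremum of regret at least `q0`; hence `δ¹ ≡ 1` is a
minimax regret rule and the minimax regret value equals `q0`. -/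
theorem stmt9 (α r : ℝ)
    (h : (α ∈ Ioo (0 : ℝ) 1 ∧ r ∈ Icc (0 : ℝ) 1) ∨ (α = 0 ∧ r = 1))
    (N : ℕ) (q0 : ℝ) (hq01 : q0 ∈ Icc (0 : ℝ) 1) (hq : q0 < 1 / 2) :
    IsGreatest (regretSetTI α r N q0 fun _ => 1) q0 ∧
    sSup (regretSetTI α r N q0 fun _ => 1) = q0 ∧
    (∀ δ : (Fin N → ℝ) → ℝ, Measurable δ → (∀ w, δ w ∈ Icc (0 : ℝ) 1) →
      q0 ≤ sSup (regretSetTI α r N q0 δ)) ∧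
    (∀ δ : (Fin N → ℝ) → ℝ, Measurable δ → (∀ w, δ w ∈ Icc (0 : ℝ) 1) →
      sSup (regretSetTI α r N q0 fun _ => 1) ≤ sSup (regretSetTI α r N q0 δ)) := by
  have hr : r ∈ Icc (0:ℝ) 1 := by
    rcases h with ⟨_, hr⟩ | ⟨_, hr⟩
    · exact hr
    · rw [hr]; exact ⟨zero_le_one, le_refl 1⟩
  have hα0 : 0 ≤ α := by
    rcases h with ⟨⟨hα, _⟩, _⟩ | ⟨hα, _⟩
    · exact hα.le
    · rw [hα]
  have hα1 : α < 1 := by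
    rcases h with ⟨⟨_, hα⟩, _⟩ | ⟨hα, _⟩
    · exact hα
    · rw [hα]; norm_num
  -- quantile of a point mass
  have quant_dirac : ∀ c ∈ Icc (0:ℝ) 1, quant α r (Measure.dirac c) = c := by
    intro c hc
    rcases h with ⟨⟨hαa, hαb⟩, _⟩ | ⟨hαa, hrb⟩
    · exact quant_of_singleton α r _ (quantSet_dirac_pos hαa hαb hc)
    · rw [hαa, hrb]
      exact quant_of_Icc 0 _ hc.1 (quantSet_dirac_zero hc)
  have quant_Ber_one : quant α r (Ber 1) = 0 :=
    quant_of_singleton α r _ (quantSet_Ber_gt hα0 hα1 (le_refl 1))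
  -- Part 1
  have hgreatest : IsGreatest (regretSetTI α r N q0 fun _ => 1) q0 := by
    constructor
    · refine ⟨Measure.dirac q0, Ber 1, isProb01_dirac q0 hq01,
        isProb01_Ber 1 zero_le_one (le_refl 1), quant_dirac q0 hq01, ?_⟩
      have hint : (∫ w, (fun _ => (1:ℝ)) w ∂(sampleLawTI N (Ber 1))) = 1 :=
        integral_sampleLaw_one N (Ber 1) (Ber_isProb 1 zero_le_one (le_refl 1))
      rw [regretTI, hint, mix_one, quant_Ber_one, max_eq_left hq01.1, sub_zero]
    · rintro v ⟨μ0, μ1, h0, h1, hq0, rfl⟩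
      have hint : (∫ w, (fun _ => (1:ℝ)) w ∂(sampleLawTI N μ1)) = 1 :=
        integral_sampleLaw_one N μ1 h1.1
      rw [regretTI, hint, mix_one]
      have hA := quant_mem_Icc α r μ1 hr
      have hmax : max q0 (quant α r μ1) ≤ q0 + quant α r μ1 :=
        max_le (by linarith [hA.1]) (by linarith [hq01.1])
      linarith
  have hsup : sSup (regretSetTI α r N q0 fun _ => 1) = q0 := hgreatest.csSup_eq
  -- Part 3
  have hpart3 : ∀ δ : (Fin N → ℝ) → ℝ, Measurable δ → (∀ w, δ w ∈ Icc (0 : ℝ) 1) →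
      q0 ≤ sSup (regretSetTI α r N q0 δ) := by
    intro δ hδm hδb
    have hBdd : BddAbove (regretSetTI α r N q0 δ) :=
      ⟨1, fun v hv => regret_le_one α r hr N q0 hq01 δ v hv⟩
    set Φ : ℝ → ℝ := fun a => ∑ T ∈ (Finset.univ : Finset (Fin N)).powerset,
      a ^ T.card * (1 - a) ^ (N - T.card) * δ (wvec N T) with hΦdef
    have hΦint : ∀ a, 0 ≤ a → a ≤ 1 → (∫ w, δ w ∂(sampleLawTI N (Ber a))) = Φ a :=
      fun a ha ha1 => integral_sampleLaw_Ber N a ha ha1 δ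
    have hΦnonneg : ∀ a, 0 ≤ a → a ≤ 1 → 0 ≤ Φ a := by
      intro a ha ha1
      apply Finset.sum_nonneg
      intro T _
      have hv := (hδb (wvec N T)).1
      exact mul_nonneg (mul_nonneg (pow_nonneg ha _)
        (pow_nonneg (by linarith : (0:ℝ) ≤ 1 - a) _)) hv
    have hΦle1 : ∀ a, 0 ≤ a → a ≤ 1 → Φ a ≤ 1 := by
      intro a ha ha1
      rw [hΦdef]
      calc ∑ T ∈ (Finset.univ : Finset (Fin N)).powerset,
            a ^ T.card * (1 - a) ^ (N - T.card) * δ (wvec N T)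
          ≤ ∑ T ∈ (Finset.univ : Finset (Fin N)).powerset,
            a ^ T.card * (1 - a) ^ (N - T.card) := by
            apply Finset.sum_le_sum
            intro T _
            have h1 := (hδb (wvec N T)).2
            have h0 := (hδb (wvec N T)).1
            have h2 : (0:ℝ) ≤ a ^ T.card * (1 - a) ^ (N - T.card) :=
              mul_nonneg (pow_nonneg ha _) (pow_nonneg (by linarith : (0:ℝ) ≤ 1 - a) _)
            nlinarith
        _ = 1 := sum_coef N a
    have hcont : Continuous Φ := by
      apply continuous_finset_sum
      intro T _
      exact ((continuous_pow T.card).mul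
        ((continuous_const.sub continuous_id).pow (N - T.card))).mul continuous_const
    suffices hex : ∃ v ∈ regretSetTI α r N q0 δ, q0 ≤ v by
      obtain ⟨v, hv, hq0v⟩ := hex
      exact le_trans hq0v (le_csSup hBdd hv)
    rcases h with ⟨⟨hαa, hαb⟩, _⟩ | ⟨hαa, hrb⟩
    · -- α ∈ (0,1)
      by_cases hgood : ∃ a, 0 < a ∧ a < α ∧ Φ a * (1 - a) < 1 - α
      · obtain ⟨a, ha0, haα, hba⟩ := hgood
        have ha1 : a ≤ 1 := le_trans haα.le hα1.le
        refine ⟨_, ⟨Measure.dirac q0, Ber a, isProb01_dirac q0 hq01,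
          isProb01_Ber a ha0.le ha1, quant_dirac q0 hq01, rfl⟩, ?_⟩
        have hp0 : 0 ≤ Φ a := hΦnonneg a ha0.le ha1
        have hp1 : Φ a ≤ 1 := hΦle1 a ha0.le ha1
        have hμ1 : quant α r (Ber a) = 1 :=
          quant_of_singleton α r _ (quantSet_Ber_lt ha0.le haα hα1.le)
        have hν : quant α r (mix (Φ a) (Measure.dirac q0) (Ber a)) = q0 := by
          apply quant_of_singleton α r _
          apply quantSet_nu_good hp0 hp1 ha0.le ha1
          · nlinarith
          · exact hba
          · exact hq01.1
          · linarith
        rw [regretTI, hΦint a ha0.le ha1, hν, hμ1, max_eq_right (by linarith [hq01.2] : q0 ≤ 1)]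
        linarith
      · push_neg at hgood
        have hglim : 1 - α ≤ Φ α * (1 - α) := by
          have hgcont : Continuous fun a => Φ a * (1 - a) :=
            hcont.mul (continuous_const.sub continuous_id)
          have ht : Filter.Tendsto (fun a => Φ a * (1 - a)) (nhdsWithin α (Iio α))
              (nhds (Φ α * (1 - α))) :=
            (hgcont.tendsto α).mono_left nhdsWithin_le_nhds
          refine ge_of_tendsto ht ?_
          have h0 : ∀ᶠ a in nhdsWithin α (Iio α), 0 < a :=
            eventually_nhdsWithin_of_eventually_nhds (eventually_gt_nhds hαa)
          filter_upwards [h0, self_mem_nhdsWithin] with a ha0 haα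
          exact hgood a ha0 haα
        have hΦα : 1 ≤ Φ α := by
          have h1α : 0 < 1 - α := by linarith
          nlinarith
        have hvuniv : δ (wvec N Finset.univ) = 1 := by
          by_contra hne
          have hlt : δ (wvec N Finset.univ) < 1 := lt_of_le_of_ne (hδb _).2 hne
          have hstrict : Φ α < ∑ T ∈ (Finset.univ : Finset (Fin N)).powerset,
              α ^ T.card * (1 - α) ^ (N - T.card) := by
            apply Finset.sum_lt_sum
            · intro T _
              have h1 := (hδb (wvec N T)).2
              have h0 := (hδb (wvec N T)).1
              have h2 : (0:ℝ) ≤ α ^ T.card * (1 - α) ^ (N - T.card) :=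
                mul_nonneg (pow_nonneg hα0 _) (pow_nonneg (by linarith : (0:ℝ) ≤ 1 - α) _)
              nlinarith
            · refine ⟨Finset.univ, Finset.mem_powerset_self _, ?_⟩
              have hwpos : (0:ℝ) < α ^ (Finset.univ : Finset (Fin N)).card
                  * (1 - α) ^ (N - (Finset.univ : Finset (Fin N)).card) := by
                have h1α : 0 < 1 - α := by linarith
                exact mul_pos (pow_pos hαa _) (pow_pos h1α _)
              nlinarith
          rw [sum_coef] at hstrict
          linarith
        have hP1 : Φ 1 = 1 := by
          simp only [hΦdef]
          rw [Finset.sum_eq_single_of_mem Finset.univ (Finset.mem_powerset_self _)]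
          · simp [hvuniv]
          · intro T _ hne
            have hcard : T.card < N := by
              have := Finset.card_lt_card (Finset.ssubset_univ_iff.2 hne)
              simpa using this
            rw [show (1:ℝ) - 1 = 0 by norm_num, zero_pow (by omega : N - T.card ≠ 0)]
            ring
        refine ⟨_, ⟨Measure.dirac q0, Ber 1, isProb01_dirac q0 hq01,
          isProb01_Ber 1 zero_le_one (le_refl 1), quant_dirac q0 hq01, rfl⟩, ?_⟩
        rw [regretTI, hΦint 1 zero_le_one (le_refl 1), hP1, mix_one, quant_Ber_one,
          max_eq_left hq01.1, sub_zero]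
    · -- α = 0, r = 1
      subst hαa; subst hrb
      by_cases hu : δ (wvec N ∅) = 1
      · -- Ber (1/2) state
        have hphalf : (0:ℝ) < Φ (1/2) := by
          have hterm : (0:ℝ) < (1/2:ℝ) ^ (∅ : Finset (Fin N)).card
              * (1 - 1/2) ^ (N - (∅ : Finset (Fin N)).card) * δ (wvec N ∅) := by
            rw [hu]; norm_num
          refine lt_of_lt_of_le hterm ?_
          simp only [hΦdef]
          apply Finset.single_le_sum (f := fun T => (1/2:ℝ) ^ T.card
            * (1 - 1/2) ^ (N - T.card) * δ (wvec N T))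
          · intro T _
            have hv := (hδb (wvec N T)).1
            have : (0:ℝ) ≤ (1/2:ℝ) ^ T.card * (1 - 1/2) ^ (N - T.card) :=
              mul_nonneg (pow_nonneg (by norm_num) _) (pow_nonneg (by norm_num) _)
            nlinarith
          · exact Finset.empty_mem_powerset _
        have hp1 : Φ (1/2) ≤ 1 := hΦle1 (1/2) (by norm_num) (by norm_num)
        refine ⟨_, ⟨Measure.dirac q0, Ber (1/2), isProb01_dirac q0 hq01,
          isProb01_Ber (1/2) (by norm_num) (by norm_num), quant_dirac q0 hq01, rfl⟩, ?_⟩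
        have hμ1 : quant 0 1 (Ber (1/2)) = 0 :=
          quant_of_singleton 0 1 _ (quantSet_Ber_gt (le_refl 0) (by norm_num) (by norm_num))
        have hν : quant 0 1 (mix (Φ (1/2)) (Measure.dirac q0) (Ber (1/2))) = 0 := by
          apply quant_of_singleton 0 1 _
          exact quantSet_nu_zero_pos hp1 (by norm_num)
            (mul_pos hphalf (by norm_num)) hphalf.le (by norm_num) hq01
        rw [regretTI, hΦint (1/2) (by norm_num) (by norm_num), hν, hμ1,
          max_eq_left hq01.1, sub_zero]
      · have hu1 : δ (wvec N ∅) < 1 := lt_of_le_of_ne (hδb _).2 hu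
        have hu0 : 0 ≤ δ (wvec N ∅) := (hδb _).1
        have hP0 : Φ 0 = δ (wvec N ∅) := by
          simp only [hΦdef]
          rw [Finset.sum_eq_single_of_mem ∅ (Finset.empty_mem_powerset _)]
          · simp
          · intro T _ hne
            rw [zero_pow (by simpa [Finset.card_eq_zero] using hne : T.card ≠ 0)]
            ring
        refine ⟨_, ⟨Measure.dirac q0, Ber 0, isProb01_dirac q0 hq01,
          isProb01_Ber 0 (le_refl 0) zero_le_one, quant_dirac q0 hq01, rfl⟩, ?_⟩
        have hμ1 : quant 0 1 (Ber 0) = 1 := by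
          rw [Ber_zero]
          exact quant_of_Icc 0 _ zero_le_one (quantSet_dirac_zero (by norm_num))
        have hν : quant 0 1 (mix (Φ 0) (Measure.dirac q0) (Ber 0)) = q0 := by
          apply quant_of_Icc 0 _ hq01.1
          apply quantSet_nu_zero_u (hP0 ▸ hu0) (hP0 ▸ hu1) hq01
        rw [regretTI, hΦint 0 (le_refl 0) zero_le_one, hν, hμ1,
          max_eq_right (by linarith [hq01.2] : q0 ≤ 1)]
        linarith
  refine ⟨hgreatest, hsup, hpart3, ?_⟩
  intro δ hδm hδb
  rw [hsup]
  exact hpart3 δ hδm hδb
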